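/- Let A be a finite type with |A| ≥ 3 and let n ≥ 2. For i ∈ {0,…,n−2} and a permutation π of A × A, let g(i,π) be the permutation of (Fin n → A) defined by g(i,π)(w)(j) = (π(w(i), w(i+1))).1 if j = i, g(i,π)(w)(j) = (π(w(i), w(i+1))).2 if j = i+1, and g(i,π)(w)(j) = w(j) otherwise. Then the subgroup of Perm(Fin n → A) generated by { g(i,π) : 0 ≤ i ≤ n−2, π an even permutation of A × A } equals the alternating group on (Fin n → A). -/

import Mathlib

open Function

/-- The shift map on `ℤ → A`. -/
def shiftMap (A : Type*) : (ℤ → A) → (ℤ → A) := fun x i => x (i + 1)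

/-- The shift map as a permutation of `ℤ → A`. -/
def shiftPerm (A : Type*) : Equiv.Perm (ℤ → A) where
  toFun := shiftMap A
  invFun x i := x (i - 1)
  left_inv x := funext fun i => by simp [shiftMap]
  right_inv x := funext fun i => by simp [shiftMap]

/-- Finite types carry the discrete topology. -/
instance fintypeDiscreteTopology (A : Type*) [Fintype A] : TopologicalSpace A := ⊥

/-- The automorphism group of the full shift `A^ℤ`: shift-commuting self-homeomorphisms of
`ℤ → A`, as a subgroup of the permutation group of `ℤ → A`. -/
def FullShiftAut (A : Type*) [Fintype A] : Subgroup (Equiv.Perm (ℤ → A)) where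
  carrier := { f | Continuous ⇑f ∧ Continuous ⇑f.symm ∧
      ∀ x, f (shiftMap A x) = shiftMap A (f x) }
  one_mem' := ⟨continuous_id, continuous_id, fun _ => rfl⟩
  mul_mem' := by
    rintro f g ⟨hf1, hf2, hf3⟩ ⟨hg1, hg2, hg3⟩
    refine ⟨?_, ?_, fun x => ?_⟩
    · exact hf1.comp hg1
    · exact hg2.comp hf2
    · show f (g (shiftMap A x)) = shiftMap A (f (g x))
      rw [hg3, hf3]
  inv_mem' := by
    rintro f ⟨hf1, hf2, hf3⟩
    refine ⟨hf2, hf1, fun x => ?_⟩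
    apply f.injective
    rw [Equiv.Perm.coe_inv, Equiv.apply_symm_apply, hf3, Equiv.apply_symm_apply]

/-- The symbol permutation determined by a permutation of the alphabet. -/
def symbolPerm {A : Type*} (π : Equiv.Perm A) : Equiv.Perm (ℤ → A) :=
  Equiv.piCongrRight fun _ => π

/-- The partial shift on the first track. -/
def partialShift₁ (B C : Type*) : Equiv.Perm (ℤ → B × C) where
  toFun x i := ((x (i + 1)).1, (x i).2)
  invFun x i := ((x (i - 1)).1, (x i).2)
  left_inv x := funext fun i => by simp
  right_inv x := funext fun i => by simp

/-- The partial shift on the second track. -/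
def partialShift₂ (B C : Type*) : Equiv.Perm (ℤ → B × C) where
  toFun x i := ((x i).1, (x (i + 1)).2)
  invFun x i := ((x i).1, (x (i - 1)).2)
  left_inv x := funext fun i => by simp
  right_inv x := funext fun i => by simp

/-- `PAut[B;C]`: the subgroup of the automorphism group of `(B × C)^ℤ` generated by the two
partial shifts and all symbol permutations. -/
def PAut (B C : Type*) : Subgroup (Equiv.Perm (ℤ → B × C)) :=
  Subgroup.closure
    ({partialShift₁ B C, partialShift₂ B C} ∪ Set.range (symbolPerm (A := B × C)))

/-!
Induct on `n`. For `n = 2` the generators are exactly the even permutations of `A × A`,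
transported to `Fin 2 → A`. For the step, split a word of length `n + 3` as
`((Fin (n + 1) → A) × A) × A`: by induction the generators acting inside the first `n + 2`
letters give every even permutation of the first two factors, and the last generator gives
every even permutation of the last two factors. These two families generate the whole
alternating group of `(Y × B) × C` as soon as `Y`, `C` are nontrivial and `|B| ≥ 3`: the group
they generate is `2`-transitive, hence primitive, and it contains a `3`-cycle, namely the
commutator of two of its elements whose supports meet in a single point. Jordan's theorem
concludes.
-/

open Equiv Equiv.Perm MulAction
open scoped commutatorElement

namespace Equiv.Perm

theorem isThreeCycle_commutatorElement {α : Type*} [Fintype α] [DecidableEq α] {f g : Perm α}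
    {x : α} (hfx : f x ≠ x) (hgx : g x ≠ x) (h : ∀ z, f z ≠ z → g z ≠ z → z = x) :
    IsThreeCycle ⁅f, g⁆ := by
  have hfg : f (g x) = g x := by
    by_contra hne
    exact hgx (h _ hne fun e => hgx (g.injective e))
  have hgf : g (f x) = f x := by
    by_contra hne
    exact hfx (h _ (fun e => hfx (f.injective e)) hne)
  have : ⁅f, g⁆ = swap x (g x) * swap x (f x) := by
    ext z
    simp only [commutatorElement_def, Perm.mul_apply, swap_apply_def, Perm.coe_inv]
    grind [apply_symm_apply, symm_apply_apply, Equiv.apply_eq_iff_eq]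
  rw [this]
  exact isThreeCycle_swap_mul_swap_same hgx.symm hfx.symm
    fun e => hgx (f.injective (by rw [hfg, e]))

theorem exists_mem_alternatingGroup_apply_eq_and_apply_eq {α : Type*} [Fintype α]
    [DecidableEq α] (hα : 4 ≤ Fintype.card α) {a b c d : α} (hab : a ≠ b) (hcd : c ≠ d) :
    ∃ σ ∈ alternatingGroup α, σ a = c ∧ σ b = d := by
  have := alternatingGroup.isMultiplyPretransitive α
  have : IsMultiplyPretransitive (alternatingGroup α) α 2 :=
    isMultiplyPretransitive_of_le (n := Nat.card α - 2)
      (by rw [Nat.card_eq_fintype_card]; omega) (by omega)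
  obtain ⟨σ, h₁, h₂⟩ := is_two_pretransitive_iff.mp this hab hcd
  exact ⟨σ, σ.2, h₁, h₂⟩

theorem alternatingGroup_le_ker {α : Type*} [Fintype α] [DecidableEq α] (f : Perm α →* ℤˣ) :
    alternatingGroup α ≤ f.ker := by
  rw [← closure_three_cycles_eq_alternating, Subgroup.closure_le]
  intro σ hσ
  have : f σ ^ 3 = 1 := by rw [← map_pow, ← hσ.orderOf, pow_orderOf_eq_one, map_one]
  rwa [Int.units_pow_eq_pow_mod_two, pow_one] at this

theorem map_permCongrHom_alternatingGroup {α β : Type*} [Fintype α] [DecidableEq α]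
    [Fintype β] [DecidableEq β] (e : α ≃ β) :
    (alternatingGroup α).map e.permCongrHom.toMonoidHom = alternatingGroup β := by
  ext σ
  rw [Subgroup.mem_map_equiv]
  simp [Equiv.permCongrHom_symm, sign_permCongr]

def onLastTwo {Y B C : Type*} (τ : Perm (B × C)) : Perm ((Y × B) × C) :=
  (Equiv.prodAssoc Y B C).symm.permCongr ((Equiv.refl Y).prodCongr τ)

@[simp] theorem onLastTwo_apply {Y B C : Type*} (τ : Perm (B × C)) (z : (Y × B) × C) :
    onLastTwo τ z = ((z.1.1, (τ (z.1.2, z.2)).1), (τ (z.1.2, z.2)).2) := rfl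

section ProdGeneration

variable {Y B C : Type*} [Fintype Y] [DecidableEq Y] [Fintype B] [DecidableEq B]
  [Fintype C] [DecidableEq C]

theorem exists_mem_apply_eq_and_apply_eq_of_ne (G : Subgroup (Perm ((Y × B) × C)))
    (hF : ∀ σ ∈ alternatingGroup (Y × B), σ.prodCongr (Equiv.refl C) ∈ G)
    (hT : ∀ τ ∈ alternatingGroup (B × C), onLastTwo τ ∈ G)
    (hYB : 4 ≤ Fintype.card (Y × B)) (hBC : 4 ≤ Fintype.card (B × C))
    {b₁ b₂ : B} (hb : b₁ ≠ b₂) (y : Y) (c : C) {p q : (Y × B) × C} (hpq : p ≠ q) :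
    ∃ g ∈ G, g p = ((y, b₁), c) ∧ g q = ((y, b₂), c) := by
  obtain ⟨g₀, hg₀, hsep⟩ : ∃ g₀ ∈ G, (g₀ p).1 ≠ (g₀ q).1 := by
    by_cases h : p.1 = q.1
    · have hne : (p.1.2, p.2) ≠ (q.1.2, q.2) := fun e => hpq (Prod.ext h (Prod.ext_iff.mp e).2)
      obtain ⟨τ, hτ, h₁, h₂⟩ := exists_mem_alternatingGroup_apply_eq_and_apply_eq hBC hne
        (show (b₁, c) ≠ (b₂, c) by simpa)
      exact ⟨onLastTwo τ, hT τ hτ, by simp [h₁, h₂, hb]⟩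
    · exact ⟨1, one_mem G, h⟩
  obtain ⟨σ, hσ, h₁, h₂⟩ := exists_mem_alternatingGroup_apply_eq_and_apply_eq hYB hsep
    (show (y, b₁) ≠ (y, b₂) by simpa)
  obtain ⟨τ, hτ, h₃, h₄⟩ := exists_mem_alternatingGroup_apply_eq_and_apply_eq hBC
    (show (b₁, (g₀ p).2) ≠ (b₂, (g₀ q).2) by simp [hb]) (show (b₁, c) ≠ (b₂, c) by simpa)
  refine ⟨onLastTwo τ * σ.prodCongr (Equiv.refl C) * g₀,
    mul_mem (mul_mem (hT τ hτ) (hF σ hσ)) hg₀, ?_, ?_⟩ <;> simp [h₁, h₂, h₃, h₄]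

theorem isPreprimitive_of_prodCongr_mem_of_onLastTwo_mem [Nonempty Y] [Nontrivial B]
    [Nonempty C] (G : Subgroup (Perm ((Y × B) × C)))
    (hF : ∀ σ ∈ alternatingGroup (Y × B), σ.prodCongr (Equiv.refl C) ∈ G)
    (hT : ∀ τ ∈ alternatingGroup (B × C), onLastTwo τ ∈ G)
    (hYB : 4 ≤ Fintype.card (Y × B)) (hBC : 4 ≤ Fintype.card (B × C)) :
    IsPreprimitive G ((Y × B) × C) := by
  obtain ⟨b₁, b₂, hb⟩ := exists_pair_ne B
  obtain ⟨y⟩ := ‹Nonempty Y›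
  obtain ⟨c⟩ := ‹Nonempty C›
  refine isPreprimitive_of_is_two_pretransitive (is_two_pretransitive_iff.mpr
    fun {p q p' q'} hpq hpq' => ?_)
  obtain ⟨g, hg, hgp, hgq⟩ := exists_mem_apply_eq_and_apply_eq_of_ne G hF hT hYB hBC hb y c hpq
  obtain ⟨g', hg', hgp', hgq'⟩ :=
    exists_mem_apply_eq_and_apply_eq_of_ne G hF hT hYB hBC hb y c hpq'
  refine ⟨⟨g'⁻¹ * g, mul_mem (inv_mem hg') hg⟩, ?_, ?_⟩ <;>
    simp [Subgroup.smul_def, Perm.smul_def, Equiv.symm_apply_eq, hgp, hgq, hgp', hgq']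

theorem exists_isThreeCycle_mem_of_prodCongr_mem_of_onLastTwo_mem [Nontrivial Y] [Nontrivial C]
    (hB : 2 < Fintype.card B) (G : Subgroup (Perm ((Y × B) × C)))
    (hF : ∀ σ ∈ alternatingGroup (Y × B), σ.prodCongr (Equiv.refl C) ∈ G)
    (hT : ∀ τ ∈ alternatingGroup (B × C), onLastTwo τ ∈ G) :
    ∃ g ∈ G, IsThreeCycle g := by
  obtain ⟨y₁, y₂, hy⟩ := exists_pair_ne Y
  obtain ⟨b₁, b₂, b₃, h₁₂, h₁₃, h₂₃⟩ := Fintype.two_lt_card_iff.mp hB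
  obtain ⟨c₁, c₂, hc⟩ := exists_pair_ne C
  -- The supports of `σ × 1` and `onLastTwo τ` meet only in `((y₁, b₂), c₁)`.
  have hσ := isThreeCycle_swap_mul_swap_same (a := (y₁, b₂)) (b := (y₁, b₁)) (c := (y₂, b₁))
    (by simpa using h₁₂.symm) (by simp [h₁₂.symm]) (by simpa using hy)
  have hτ := isThreeCycle_swap_mul_swap_same (a := (b₂, c₁)) (b := (b₃, c₁)) (c := (b₃, c₂))
    (by simpa using h₂₃) (by simp [h₂₃]) (by simpa using hc)
  have hf := hF _ hσ.mem_alternatingGroup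
  have hg := hT _ hτ.mem_alternatingGroup
  refine ⟨_, mul_mem (mul_mem (mul_mem hf hg) (inv_mem hf)) (inv_mem hg),
    isThreeCycle_commutatorElement (x := ((y₁, b₂), c₁)) ?_ ?_ ?_⟩
  · simp [swap_apply_def, hy.symm]
  · simp [swap_apply_def, h₂₃.symm, hc.symm]
  · rintro ⟨⟨y, b⟩, c⟩ hfz hgz
    simp only [prodCongr_apply, Prod.map_apply, coe_refl, id, onLastTwo_apply, Perm.mul_apply,
      swap_apply_def] at hfz hgz
    grind

theorem alternatingGroup_le_of_prodCongr_mem_of_onLastTwo_mem [Nontrivial Y] [Nontrivial C]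
    (hB : 2 < Fintype.card B) (G : Subgroup (Perm ((Y × B) × C)))
    (hF : ∀ σ ∈ alternatingGroup (Y × B), σ.prodCongr (Equiv.refl C) ∈ G)
    (hT : ∀ τ ∈ alternatingGroup (B × C), onLastTwo τ ∈ G) :
    alternatingGroup ((Y × B) × C) ≤ G := by
  have : Nontrivial B := Fintype.one_lt_card_iff_nontrivial.mp (by omega)
  have hY := Fintype.one_lt_card_iff_nontrivial.mpr ‹Nontrivial Y›
  have hC := Fintype.one_lt_card_iff_nontrivial.mpr ‹Nontrivial C›
  have hG := isPreprimitive_of_prodCongr_mem_of_onLastTwo_mem G hF hT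
    (by rw [Fintype.card_prod]; nlinarith) (by rw [Fintype.card_prod]; nlinarith)
  obtain ⟨g, hg, hg3⟩ := exists_isThreeCycle_mem_of_prodCongr_mem_of_onLastTwo_mem hB G hF hT
  exact alternatingGroup_le_of_isPreprimitive_of_isThreeCycle_mem hG hg3 hg

end ProdGeneration

end Equiv.Perm

section Words

variable {A : Type*}

def adjMap {n : ℕ} (i : ℕ) (hi : i + 1 < n) (π : Perm (A × A)) (w : Fin n → A) : Fin n → A :=
  fun j => if j = ⟨i, by omega⟩ then (π (w ⟨i, by omega⟩, w ⟨i + 1, hi⟩)).1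
    else if j = ⟨i + 1, hi⟩ then (π (w ⟨i, by omega⟩, w ⟨i + 1, hi⟩)).2
    else w j

theorem adjMap_mul {n : ℕ} (i : ℕ) (hi : i + 1 < n) (π ρ : Perm (A × A)) (w : Fin n → A) :
    adjMap i hi (π * ρ) w = adjMap i hi π (adjMap i hi ρ w) := by
  funext j
  simp only [adjMap, Fin.mk.injEq, Nat.succ_ne_self, if_true, if_false, Perm.mul_apply]
  split_ifs <;> rfl

theorem adjMap_one {n : ℕ} (i : ℕ) (hi : i + 1 < n) (w : Fin n → A) : adjMap i hi 1 w = w := by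
  funext j
  simp only [adjMap, Perm.one_apply]
  split_ifs <;> subst_vars <;> rfl

def adjPerm {n : ℕ} (i : ℕ) (hi : i + 1 < n) : Perm (A × A) →* Perm (Fin n → A) where
  toFun π :=
    { toFun := adjMap i hi π
      invFun := adjMap i hi π⁻¹
      left_inv w := by rw [← adjMap_mul, inv_mul_cancel, adjMap_one]
      right_inv w := by rw [← adjMap_mul, mul_inv_cancel, adjMap_one] }
  map_one' := Equiv.ext (adjMap_one i hi)
  map_mul' π ρ := Equiv.ext (adjMap_mul i hi π ρ)

variable (A) in
@[simps]
def initLast (n : ℕ) : (Fin (n + 1) → A) ≃ (Fin n → A) × A where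
  toFun w := (Fin.init w, w (Fin.last n))
  invFun p := Fin.snoc p.1 p.2
  left_inv w := Fin.snoc_init_self w
  right_inv p := by simp

variable (A) in
def initLast₂ (n : ℕ) : (Fin (n + 2) → A) ≃ ((Fin n → A) × A) × A :=
  (initLast A (n + 1)).trans ((initLast A n).prodCongr (Equiv.refl A))

def snocLift (n : ℕ) : Perm (Fin n → A) →* Perm (Fin (n + 1) → A) :=
  MonoidHom.mk' (fun σ => (initLast A n).symm.permCongr (σ.prodCongr (Equiv.refl A)))
    fun _ _ => Equiv.ext fun _ => by simp [permCongr_apply]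

theorem snocLift_adjPerm {n : ℕ} (i : ℕ) (hi : i + 1 < n) (π : Perm (A × A)) :
    snocLift n (adjPerm i hi π) = adjPerm i (hi.trans n.lt_succ_self) π := by
  ext w j : 2
  induction j using Fin.lastCases with
  | last =>
    have h₁ : n ≠ i := by omega
    have h₂ : n ≠ i + 1 := by omega
    simp [snocLift, adjPerm, adjMap, permCongr_apply, Fin.ext_iff, h₁, h₂]
  | cast j => simp [snocLift, adjPerm, adjMap, permCongr_apply, Fin.ext_iff, Fin.init]

theorem initLast₂_symm_permCongr_prodCongr (n : ℕ) (σ : Perm ((Fin n → A) × A)) :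
    (initLast₂ A n).symm.permCongr (σ.prodCongr (Equiv.refl A)) =
      snocLift (n + 1) ((initLast A n).symm.permCongr σ) := by
  ext w : 1
  simp [initLast₂, snocLift, permCongr_apply]

theorem initLast₂_permCongr_adjPerm (n : ℕ) (π : Perm (A × A)) :
    (initLast₂ A n).permCongr (adjPerm n (n + 1).lt_succ_self π) = onLastTwo π := by
  refine Equiv.ext fun z => Prod.ext (Prod.ext (funext fun j => ?_) ?_) ?_
  · simp [initLast₂, adjPerm, adjMap, permCongr_apply, Fin.snoc, Fin.init, Fin.ext_iff, j.isLt.ne,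
      (j.isLt.trans n.lt_succ_self).ne]
  all_goals simp [initLast₂, adjPerm, adjMap, permCongr_apply, Fin.snoc, Fin.init, Fin.ext_iff]

theorem adjPerm_zero_eq_permCongr (π : Perm (A × A)) :
    adjPerm 0 (by decide : 0 + 1 < 2) π = (finTwoArrowEquiv A).symm.permCongr π := by
  ext w j : 2
  fin_cases j <;> simp [adjPerm, adjMap, permCongr_apply]

end Words

section Generation

variable (A : Type*) [Fintype A] [DecidableEq A]

def evenAdjPerms (n : ℕ) : Set (Perm (Fin n → A)) :=
  {p | ∃ (i : ℕ) (hi : i + 1 < n) (π : Perm (A × A)),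
    π ∈ alternatingGroup (A × A) ∧ p = adjPerm i hi π}

variable {A}

theorem closure_evenAdjPerms_le (n : ℕ) :
    Subgroup.closure (evenAdjPerms A n) ≤ alternatingGroup (Fin n → A) := by
  rw [Subgroup.closure_le]
  rintro _ ⟨i, hi, π, hπ, rfl⟩
  exact alternatingGroup_le_ker (sign.comp (adjPerm i hi)) hπ

theorem map_snocLift_closure_evenAdjPerms_le (n : ℕ) :
    (Subgroup.closure (evenAdjPerms A n)).map (snocLift n) ≤
      Subgroup.closure (evenAdjPerms A (n + 1)) := by
  rw [MonoidHom.map_closure]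
  refine Subgroup.closure_mono ?_
  rintro _ ⟨_, ⟨i, hi, π, hπ, rfl⟩, rfl⟩
  exact ⟨i, _, π, hπ, snocLift_adjPerm i hi π⟩

theorem closure_evenAdjPerms_two :
    Subgroup.closure (evenAdjPerms A 2) = alternatingGroup (Fin 2 → A) := by
  have : evenAdjPerms A 2 =
      (finTwoArrowEquiv A).symm.permCongrHom.toMonoidHom '' alternatingGroup (A × A) := by
    ext p
    constructor
    · rintro ⟨i, hi, π, hπ, rfl⟩
      obtain rfl : i = 0 := by omega
      exact ⟨π, hπ, (adjPerm_zero_eq_permCongr π).symm⟩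
    · rintro ⟨π, hπ, rfl⟩
      exact ⟨0, by decide, π, hπ, (adjPerm_zero_eq_permCongr π).symm⟩
  rw [this, ← MonoidHom.map_closure, Subgroup.closure_eq, map_permCongrHom_alternatingGroup]

theorem alternatingGroup_le_closure_evenAdjPerms_succ (hA : 3 ≤ Fintype.card A) (n : ℕ)
    (ih : Subgroup.closure (evenAdjPerms A (n + 2)) = alternatingGroup (Fin (n + 2) → A)) :
    alternatingGroup (Fin (n + 3) → A) ≤ Subgroup.closure (evenAdjPerms A (n + 3)) := by
  have : Nontrivial A := Fintype.one_lt_card_iff_nontrivial.mp (by omega)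
  set e := (initLast₂ A (n + 1)).permCongrHom
  rw [← Subgroup.map_le_map_iff_of_injective (f := e.toMonoidHom) e.injective,
    map_permCongrHom_alternatingGroup]
  refine alternatingGroup_le_of_prodCongr_mem_of_onLastTwo_mem hA _ (fun σ hσ => ?_)
    (fun τ hτ => ?_)
  · rw [Subgroup.mem_map_equiv, permCongrHom_symm, permCongrHom_coe,
      initLast₂_symm_permCongr_prodCongr]
    refine map_snocLift_closure_evenAdjPerms_le (n + 2) (Subgroup.mem_map_of_mem _ ?_)
    rw [ih, ← map_permCongrHom_alternatingGroup (initLast A (n + 1)).symm]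
    exact Subgroup.mem_map_of_mem _ hσ
  · rw [← initLast₂_permCongr_adjPerm]
    exact Subgroup.mem_map_of_mem _ (Subgroup.subset_closure ⟨n + 1, _, τ, hτ, rfl⟩)

theorem closure_evenAdjPerms (hA : 3 ≤ Fintype.card A) {n : ℕ} (hn : 2 ≤ n) :
    Subgroup.closure (evenAdjPerms A n) = alternatingGroup (Fin n → A) := by
  obtain ⟨n, rfl⟩ := Nat.exists_eq_add_of_le' hn
  induction n with
  | zero => exact closure_evenAdjPerms_two
  | succ n ih =>
    exact (closure_evenAdjPerms_le _).antisymm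
      (alternatingGroup_le_closure_evenAdjPerms_succ hA n (ih (by omega)))

end Generation

/-- for `|A| ≥ 3` and `n ≥ 2`, the permutations of `Fin n → A` applying an even
permutation of `A × A` to two adjacent coordinates generate the alternating group on
`Fin n → A`. -/
theorem stmt5 (A : Type) [Fintype A] [DecidableEq A] (hA : 3 ≤ Fintype.card A)
    (n : ℕ) (hn : 2 ≤ n)
    (g : ∀ i : ℕ, i + 1 < n → Equiv.Perm (A × A) → Equiv.Perm (Fin n → A))
    (hg : ∀ (i : ℕ) (hi : i + 1 < n) (π : Equiv.Perm (A × A)) (w : Fin n → A) (j : Fin n),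
      g i hi π w j =
        if j = (⟨i, by omega⟩ : Fin n) then (π (w ⟨i, by omega⟩, w ⟨i + 1, hi⟩)).1
        else if j = (⟨i + 1, hi⟩ : Fin n) then (π (w ⟨i, by omega⟩, w ⟨i + 1, hi⟩)).2
        else w j) :
    Subgroup.closure {p : Equiv.Perm (Fin n → A) |
        ∃ (i : ℕ) (hi : i + 1 < n) (π : Equiv.Perm (A × A)),
          π ∈ alternatingGroup (A × A) ∧ p = g i hi π} =
      alternatingGroup (Fin n → A) := by
  obtain rfl : g = fun i hi π => adjPerm i hi π :=
    funext fun i => funext fun hi => funext fun π => Equiv.ext fun w => funext (hg i hi π w)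
  exact closure_evenAdjPerms hA hn
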